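/- Let d and p be coprime positive integers, and work in the ring R = ℤ[√(-(d*p))]. Then (span {(d : R), √(-(d*p))})² = span {(d : R)}. -/
import Mathlib

open Pointwise


theorem ramified_ideal_above_d_sq (d p : ℤ) (hd : 0 < d) (hp : 0 < p)
    (h : IsCoprime d p) :
    (Ideal.span ({(d : Zsqrtd (-(d * p))), Zsqrtd.sqrtd} : Set (Zsqrtd (-(d * p))))) ^ 2 =
      Ideal.span ({(d : Zsqrtd (-(d * p)))} : Set (Zsqrtd (-(d * p)))) := by
  obtain ⟨a, b, hab⟩ := h
  rw [sq, Ideal.span_mul_span']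
  apply le_antisymm
  · rw [Ideal.span_le]
    rintro x ⟨y, hy, z, hz, rfl⟩
    rw [SetLike.mem_coe, Ideal.mem_span_singleton]
    simp only [Set.mem_insert_iff, Set.mem_singleton_iff] at hy hz
    rcases hy with rfl | rfl <;> rcases hz with rfl | rfl <;> dsimp only
    · exact Dvd.intro _ rfl
    · exact Dvd.intro _ rfl
    · exact Dvd.intro_left _ rfl
    · rw [Zsqrtd.dmuld]
      refine ⟨(-(p : Zsqrtd (-(d * p)))), ?_⟩
      push_cast
      ring
  · rw [Ideal.span_le, Set.singleton_subset_iff, SetLike.mem_coe]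
    have h1 : ((d : Zsqrtd (-(d * p))) * (d : Zsqrtd (-(d * p)))) ∈
        Ideal.span (({(d : Zsqrtd (-(d * p))), Zsqrtd.sqrtd} : Set (Zsqrtd (-(d * p)))) *
          {(d : Zsqrtd (-(d * p))), Zsqrtd.sqrtd}) :=
      Ideal.subset_span (Set.mul_mem_mul (by simp) (by simp))
    have h2 : ((Zsqrtd.sqrtd : Zsqrtd (-(d * p))) * Zsqrtd.sqrtd) ∈
        Ideal.span (({(d : Zsqrtd (-(d * p))), Zsqrtd.sqrtd} : Set (Zsqrtd (-(d * p)))) *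
          {(d : Zsqrtd (-(d * p))), Zsqrtd.sqrtd}) :=
      Ideal.subset_span (Set.mul_mem_mul (by simp) (by simp))
    have key : (d : Zsqrtd (-(d * p))) =
        (a : Zsqrtd (-(d * p))) * ((d : Zsqrtd (-(d * p))) * (d : Zsqrtd (-(d * p)))) +
        (-(b : Zsqrtd (-(d * p)))) * ((Zsqrtd.sqrtd : Zsqrtd (-(d * p))) * Zsqrtd.sqrtd) := by
      have hab' : (a : Zsqrtd (-(d * p))) * d + b * p = 1 := by
        exact_mod_cast congrArg (fun x : ℤ => (x : Zsqrtd (-(d * p)))) hab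
      rw [Zsqrtd.dmuld]
      push_cast
      linear_combination (-(d : Zsqrtd (-(d * p)))) * hab'
    have := add_mem (Ideal.mul_mem_left _ (a : Zsqrtd (-(d * p))) h1)
      (Ideal.mul_mem_left _ (-(b : Zsqrtd (-(d * p)))) h2)
    rwa [← key] at this
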